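/- Under the assumptions of the utility-based acceptability index framework, the index α satisfies arbitrage consistency: for X ∈ L^∞, X ≥ 0 almost surely if and only if α(X) = ∞. -/

import Mathlib

open MeasureTheory ENNReal

/-- `μ_γ(X) = -(1/γ) U⁻¹(E[U(γX)])`. -/
noncomputable def mu {Ω : Type*} [MeasurableSpace Ω] (P : Measure Ω)
    (U : ℝ → ℝ) (γ : ℝ) (X : Ω → ℝ) : ℝ :=
  -(1 / γ) * Function.invFun U (∫ ω, U (γ * X ω) ∂P)

/-- Utility-based acceptability index `α(X) = sup {γ > 0 : μ_γ(X) ≤ 0}`,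
with values in `[0, ∞]` and `sup ∅ = 0`. -/
noncomputable def alpha {Ω : Type*} [MeasurableSpace Ω] (P : Measure Ω)
    (U : ℝ → ℝ) (X : Ω → ℝ) : ℝ≥0∞ :=
  ⨆ γ ∈ {γ : ℝ | 0 < γ ∧ mu P U γ X ≤ 0}, ENNReal.ofReal γ

/-!
If `X ≥ 0` a.s. then `U (γ X) ≥ U 0` a.s., so `μ_γ(X) ≤ 0` for every `γ > 0` and `α(X) = ∞`.
Conversely, if `P (X ≤ -ε) > 0` for some `ε > 0`, concavity makes `U` decrease at least linearly
at `-∞`, so `E[U(γX)] ≤ M + P (X ≤ -ε) (U (-γε) - M) → -∞` where `M` bounds `U`. Hence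
`μ_{γ₀}(X) > 0` for some `γ₀`, and scale aversion (`γ ↦ μ_γ(X)` nondecreasing) confines the
acceptable `γ` to `(0, γ₀]`.
-/

open Filter Set

lemma ConcaveOn.le_add_mul_of_nonpos {U : ℝ → ℝ} (hconc : ConcaveOn ℝ univ U) {x : ℝ}
    (hx : x ≤ 0) : U x ≤ U 0 + (U 1 - U 0) * x := by
  rcases hx.eq_or_lt with rfl | hx
  · simp
  have hslope := hconc.slope_anti_adjacent (mem_univ x) (mem_univ 1) hx one_pos
  rw [sub_zero, div_one, le_div_iff₀ (by linarith)] at hslope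
  linarith

lemma ConcaveOn.tendsto_atBot {U : ℝ → ℝ} (hconc : ConcaveOn ℝ univ U) (h01 : U 0 < U 1) :
    Tendsto U atBot atBot := by
  refine tendsto_atBot_mono' _ ((eventually_le_atBot 0).mono fun x hx ↦
    hconc.le_add_mul_of_nonpos hx) ?_
  exact tendsto_atBot_add_const_left _ _ (tendsto_id.const_mul_atBot (sub_pos.2 h01))

lemma iSup_ofReal_eq_top_iff {S : Set ℝ} :
    ⨆ γ ∈ S, ENNReal.ofReal γ = ⊤ ↔ ¬BddAbove S := by
  constructor
  · rintro htop ⟨b, hb⟩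
    have hle : ⨆ γ ∈ S, ENNReal.ofReal γ ≤ ENNReal.ofReal b :=
      iSup₂_le fun γ hγ ↦ ENNReal.ofReal_le_ofReal (hb hγ)
    exact ENNReal.ofReal_ne_top (top_le_iff.1 (htop ▸ hle))
  · intro hunbdd
    refine eq_top_iff.2 (ENNReal.iSup_natCast ▸ iSup_le fun n ↦ ?_)
    obtain ⟨γ, hγS, hnγ⟩ := not_bddAbove_iff.1 hunbdd n
    calc (n : ℝ≥0∞) = ENNReal.ofReal n := (ENNReal.ofReal_natCast n).symm
      _ ≤ ENNReal.ofReal γ := ENNReal.ofReal_le_ofReal hnγ.le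
      _ ≤ ⨆ γ ∈ S, ENNReal.ofReal γ := le_iSup₂_of_le γ hγS le_rfl

section Integral

variable {Ω : Type*} [MeasurableSpace Ω] {P : Measure Ω} {U : ℝ → ℝ} {Y : Ω → ℝ} {D : ℝ}

lemma MeasureTheory.MemLp.exists_ae_abs_le {X : Ω → ℝ} (hX : MemLp X ⊤ P) :
    ∃ C, ∀ᵐ ω ∂P, |X ω| ≤ C := by
  have hfin := hX.eLpNorm_lt_top
  rw [eLpNorm_exponent_top, eLpNormEssSup_lt_top_iff_isBoundedUnder] at hfin
  obtain ⟨C, hC⟩ := hfin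
  exact ⟨C, (eventually_map.1 hC).mono fun ω h ↦ by
    simpa [← Real.norm_eq_abs, ← coe_nnnorm] using h⟩

lemma integrable_comp_of_ae_abs_le [IsFiniteMeasure P] (hU : Continuous U) (hmono : Monotone U)
    (hY : AEMeasurable Y P) (hD : ∀ᵐ ω ∂P, |Y ω| ≤ D) : Integrable (fun ω ↦ U (Y ω)) P :=
  .of_mem_Icc (U (-D)) (U D) (hU.measurable.comp_aemeasurable hY) <|
    hD.mono fun _ h ↦ ⟨hmono (abs_le.1 h).1, hmono (abs_le.1 h).2⟩

lemma integral_comp_mem_range_of_ae_abs_le [IsProbabilityMeasure P] (hU : Continuous U)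
    (hmono : Monotone U) (hY : AEMeasurable Y P) (hD : ∀ᵐ ω ∂P, |Y ω| ≤ D) :
    ∫ ω, U (Y ω) ∂P ∈ range U := by
  have hint := integrable_comp_of_ae_abs_le hU hmono hY hD
  refine intermediate_value_univ (-D) D hU ⟨?_, ?_⟩
  · simpa using integral_mono_ae (integrable_const _) hint
      (hD.mono fun _ h ↦ hmono (abs_le.1 h).1)
  · simpa using integral_mono_ae hint (integrable_const _)
      (hD.mono fun _ h ↦ hmono (abs_le.1 h).2)

lemma exists_measure_le_neg_ne_zero {X : Ω → ℝ} (hneg : ¬∀ᵐ ω ∂P, 0 ≤ X ω) :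
    ∃ ε > 0, P {ω | X ω ≤ -ε} ≠ 0 := by
  contrapose! hneg
  have hgt : ∀ᵐ ω ∂P, ∀ n : ℕ, -(1 / (n + 1 : ℝ)) < X ω := ae_all_iff.2 fun n ↦ by
    simpa [ae_iff] using hneg (1 / (n + 1)) (by positivity)
  filter_upwards [hgt] with ω hω
  by_contra! hXω
  obtain ⟨n, hn⟩ := exists_nat_one_div_lt (neg_pos.2 hXω)
  linarith [hω n]

lemma tendsto_integral_comp_mul_atBot [IsFiniteMeasure P] (hconc : ConcaveOn ℝ univ U)
    (hmono : StrictMono U) (hbdd : BddAbove (range U)) {X : Ω → ℝ} (hX : AEMeasurable X P)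
    (hint : ∀ γ, Integrable (fun ω ↦ U (γ * X ω)) P) (hneg : ¬∀ᵐ ω ∂P, 0 ≤ X ω) :
    Tendsto (fun γ ↦ ∫ ω, U (γ * X ω) ∂P) atTop atBot := by
  obtain ⟨ε, hε, hA⟩ := exists_measure_le_neg_ne_zero hneg
  obtain ⟨M, hM⟩ := hbdd
  set A := {ω | X ω ≤ -ε}
  have hAm : NullMeasurableSet A P := hX.nullMeasurableSet_preimage measurableSet_Iic
  have hpA : 0 < P.real A := ENNReal.toReal_pos hA (measure_ne_top _ _)
  have hbound (γ : ℝ) (hγ : 0 ≤ γ) :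
      ∫ ω, U (γ * X ω) ∂P ≤ M * P.real univ + P.real A * (U (-(γ * ε)) - M) := by
    have hpt : ∀ ω, U (γ * X ω) ≤ M + A.indicator (fun _ ↦ U (-(γ * ε)) - M) ω := by
      intro ω
      by_cases hω : ω ∈ A
      · rw [indicator_of_mem hω, add_sub_cancel]
        exact hmono.monotone (by nlinarith [show X ω ≤ -ε from hω])
      · rw [indicator_of_notMem hω, add_zero]
        exact hM ⟨_, rfl⟩
    have hind := (integrable_const (U (-(γ * ε)) - M)).indicator₀ hAm
    calc ∫ ω, U (γ * X ω) ∂P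
        ≤ ∫ ω, (M + A.indicator (fun _ ↦ U (-(γ * ε)) - M) ω) ∂P :=
          integral_mono (hint γ) ((integrable_const M).add hind) hpt
      _ = M * P.real univ + P.real A * (U (-(γ * ε)) - M) := by
          rw [integral_add (integrable_const M) hind, integral_indicator₀ hAm, integral_const,
            setIntegral_const, smul_eq_mul, smul_eq_mul, mul_comm M]
  refine tendsto_atBot_mono' _ ((eventually_ge_atTop 0).mono hbound) ?_
  have hU : Tendsto (fun γ ↦ U (-(γ * ε))) atTop atBot :=
    (hconc.tendsto_atBot (hmono zero_lt_one)).comp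
      (tendsto_neg_atTop_atBot.comp (tendsto_id.atTop_mul_const hε))
  exact tendsto_atBot_add_const_left _ _
    ((tendsto_atBot_add_const_right _ _ hU).const_mul_atBot hpA)

lemma mu_nonpos_iff {γ : ℝ} {X : Ω → ℝ} (hγ : 0 < γ) (hmono : StrictMono U)
    (hrange : ∫ ω, U (γ * X ω) ∂P ∈ range U) :
    mu P U γ X ≤ 0 ↔ U 0 ≤ ∫ ω, U (γ * X ω) ∂P := by
  rw [mu, ← Function.invFun_eq hrange, hmono.le_iff_le, Function.invFun_eq hrange, neg_mul,
    neg_nonpos, mul_nonneg_iff_of_pos_left (one_div_pos.2 hγ)]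

end Integral

theorem alpha_arbitrage_consistent {Ω : Type*} [MeasurableSpace Ω] (P : Measure Ω)
    [IsProbabilityMeasure P] (U : ℝ → ℝ)
    (hC2 : ContDiff ℝ 2 U) (hconc : ConcaveOn ℝ Set.univ U)
    (hmono : StrictMono U) (hbdd : BddAbove (Set.range U))
    (hreg : ∀ (X : Ω → ℝ), MemLp X ⊤ P → ∀ γ₁ γ₂ : ℝ, 0 < γ₁ → γ₁ ≤ γ₂ →
      mu P U γ₁ X ≤ mu P U γ₂ X)
    (X : Ω → ℝ) (hX : MemLp X ⊤ P) :
    (∀ᵐ ω ∂P, 0 ≤ X ω) ↔ alpha P U X = ⊤ := by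
  obtain ⟨C, hC⟩ := hX.exists_ae_abs_le
  have hXm := hX.aestronglyMeasurable.aemeasurable
  have hbound (γ : ℝ) : ∀ᵐ ω ∂P, |γ * X ω| ≤ |γ| * C :=
    hC.mono fun ω h ↦ by rw [abs_mul]; gcongr
  have hint (γ : ℝ) := integrable_comp_of_ae_abs_le hC2.continuous hmono.monotone
    (hXm.const_mul γ) (hbound γ)
  have hrange (γ : ℝ) := integral_comp_mem_range_of_ae_abs_le hC2.continuous hmono.monotone
    (hXm.const_mul γ) (hbound γ)
  rw [alpha, iSup_ofReal_eq_top_iff]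
  constructor
  · intro hX0 ⟨r, hr⟩
    have hγ : 0 < max r 0 + 1 := by positivity
    have hrγ : r < max r 0 + 1 := by linarith [le_max_left r 0]
    refine hrγ.not_ge (hr ⟨hγ, ?_⟩)
    refine (mu_nonpos_iff hγ hmono (hrange _)).2 ?_
    have := integral_mono_ae (integrable_const (U 0)) (hint (max r 0 + 1))
      (hX0.mono fun ω h ↦ hmono.monotone (by positivity))
    simpa using this
  · intro hunbdd
    by_contra hneg
    obtain ⟨γ₀, hlt, hγ₀⟩ := ((tendsto_integral_comp_mul_atBot hconc hmono hbdd hXm hint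
      hneg).eventually_lt_atBot (U 0) |>.and (eventually_gt_atTop 0)).exists
    have hmu : 0 < mu P U γ₀ X := not_le.1 fun h ↦
      ((mu_nonpos_iff hγ₀ hmono (hrange γ₀)).1 h).not_gt hlt
    refine hunbdd ⟨γ₀, fun γ ⟨hγ, hγmu⟩ ↦ le_of_not_gt fun h ↦ ?_⟩
    exact (hmu.trans_le (hreg X hX γ₀ γ hγ₀ h.le)).not_ge hγmu
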